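/- arXiv:math/9903101 — 2 statements merged into one kernel-verified Lean document; each statement's English description precedes it below -/
import Mathlib

section
/- Given any triple (x, y, z) of real numbers in (0, π] satisfying x + y + z ≤ 2π, x ≤ y + z, y ≤ z + x, z ≤ x + y, there exist distinct points p, q, r on the unit two-sphere with d(p,q) = x, d(q,r) = y, d(r,p) = z. -/
open scoped RealInnerProductSpace

noncomputable def sdist (u v : EuclideanSpace ℝ (Fin 3)) : ℝ :=
  Real.arccos ⟪u, v⟫

def unitSphere : Set (EuclideanSpace ℝ (Fin 3)) :=
  Metric.sphere (0 : EuclideanSpace ℝ (Fin 3)) 1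

/-!
Put `p` at the pole `e₁` and `q` at polar angle `x` on the meridian of azimuth `0`. Any point `r`
at polar angle `z` lies at distance `z` from `p`, and by the spherical law of cosines its distance
`y'` from `q` satisfies `cos y' = cos x cos z + sin x sin z cos θ`, where `θ` is the azimuth of `r`.
As `θ` runs over `[0, π]` this sweeps `[cos (x + z), cos (x - z)]`, and the triangle and perimeter
inequalities say exactly that `cos y` lies in this interval.
-/

open Real

noncomputable def sphericalPoint (a θ : ℝ) : EuclideanSpace ℝ (Fin 3) :=
  !₂[cos a, sin a * cos θ, sin a * sin θ]

theorem inner_sphericalPoint (a α b β : ℝ) :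
    ⟪sphericalPoint a α, sphericalPoint b β⟫ = cos a * cos b + sin a * sin b * cos (α - β) := by
  simp only [sphericalPoint, EuclideanSpace.inner_eq_star_dotProduct, dotProduct, Pi.star_apply,
    star_trivial, Fin.sum_univ_three, Matrix.cons_val_zero, Matrix.cons_val_one, Matrix.cons_val,
    cos_sub]
  ring

theorem sphericalPoint_mem_unitSphere (a θ : ℝ) : sphericalPoint a θ ∈ unitSphere := by
  rw [unitSphere, mem_sphere_zero_iff_norm, ← sq_eq_sq₀ (norm_nonneg _) zero_le_one,
    ← real_inner_self_eq_norm_sq, inner_sphericalPoint, sub_self, cos_zero]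
  linear_combination cos_sq_add_sin_sq a

theorem sdist_self_of_mem {u : EuclideanSpace ℝ (Fin 3)} (hu : u ∈ unitSphere) : sdist u u = 0 := by
  rw [unitSphere, mem_sphere_zero_iff_norm] at hu
  rw [sdist, real_inner_self_eq_norm_sq, hu, one_pow, arccos_one]

theorem ne_of_sdist_pos {u v : EuclideanSpace ℝ (Fin 3)} (hu : u ∈ unitSphere)
    (huv : 0 < sdist u v) : u ≠ v := by
  rintro rfl
  exact huv.ne' (sdist_self_of_mem hu)

theorem cos_le_cos_of_le_of_add_le_two_pi {y s : ℝ} (hy : 0 ≤ y) (hys : y ≤ s)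
    (hsum : s + y ≤ 2 * π) : cos s ≤ cos y := by
  rcases le_or_gt s π with h | h
  · exact cos_le_cos_of_nonneg_of_le_pi hy h hys
  · rw [← cos_two_pi_sub]
    exact cos_le_cos_of_nonneg_of_le_pi hy (by linarith) (by linarith)

theorem cos_le_cos_of_abs_le {y d : ℝ} (hd : |d| ≤ y) (hy : y ≤ π) : cos y ≤ cos d := by
  rw [← cos_abs d]
  exact cos_le_cos_of_nonneg_of_le_pi (abs_nonneg d) hy hd

theorem exists_cos_add_sin_mul_cos_eq {a b c : ℝ} (hlo : cos (a + b) ≤ c) (hhi : c ≤ cos (a - b)) :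
    ∃ θ, cos a * cos b + sin a * sin b * cos θ = c := by
  have hcont : Continuous fun θ => cos a * cos b + sin a * sin b * cos θ := by fun_prop
  obtain ⟨θ, -, hθ⟩ := intermediate_value_Icc' pi_pos.le hcont.continuousOn
    ⟨by simpa [cos_add, sub_eq_add_neg] using hlo, by simpa [cos_sub] using hhi⟩
  exact ⟨θ, hθ⟩

theorem stmt_7 (x y z : ℝ) (hx : 0 < x) (hy : 0 < y) (hz : 0 < z)
    (hx' : x ≤ Real.pi) (hy' : y ≤ Real.pi) (hz' : z ≤ Real.pi)
    (h1 : x + y + z ≤ 2 * Real.pi) (h2 : x ≤ y + z) (h3 : y ≤ z + x) (h4 : z ≤ x + y) :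
    ∃ p q r : EuclideanSpace ℝ (Fin 3), p ∈ unitSphere ∧ q ∈ unitSphere ∧ r ∈ unitSphere ∧
      p ≠ q ∧ q ≠ r ∧ r ≠ p ∧ sdist p q = x ∧ sdist q r = y ∧ sdist r p = z := by
  obtain ⟨θ, hθ⟩ := exists_cos_add_sin_mul_cos_eq (a := x) (b := z)
    (cos_le_cos_of_le_of_add_le_two_pi hy.le (by linarith) (by linarith))
    (cos_le_cos_of_abs_le (abs_le.2 ⟨by linarith, by linarith⟩) hy')
  have hpq : sdist (sphericalPoint 0 0) (sphericalPoint x 0) = x := by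
    simp [sdist, inner_sphericalPoint, arccos_cos hx.le hx']
  have hqr : sdist (sphericalPoint x 0) (sphericalPoint z θ) = y := by
    simp [sdist, inner_sphericalPoint, hθ, arccos_cos hy.le hy']
  have hrp : sdist (sphericalPoint z θ) (sphericalPoint 0 0) = z := by
    simp [sdist, inner_sphericalPoint, arccos_cos hz.le hz']
  have hp := sphericalPoint_mem_unitSphere 0 0
  have hq := sphericalPoint_mem_unitSphere x 0
  have hr := sphericalPoint_mem_unitSphere z θ
  exact ⟨_, _, _, hp, hq, hr, ne_of_sdist_pos hp (by rwa [hpq]),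
    ne_of_sdist_pos hq (by rwa [hqr]), ne_of_sdist_pos hr (by rwa [hrp]), hpq, hqr, hrp⟩
end

section
/- The quotient of the space of ordered triples of distinct points of S² by the diagonal action of SO(3), with distance-triple map to ℝ³, has image exactly {(x,y,z) ∈ (0,π]³ : x+y+z ≤ 2π, x ≤ y+z, y ≤ z+x, z ≤ x+y}. -/
open scoped RealInnerProductSpace

/-!
On the unit sphere `sdist` is the angle between vectors, so the necessary conditions are the
triangle inequality for angles, applied once to `p, q, r` and once to `p, -r, q` (which gives the
perimeter bound via `angle x (-y) = π - angle x y`). Conversely, put `p = e₁` and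
`q = (cos x, sin x, 0)`; the point `r = (cos z, sin z cos φ, sin z sin φ)` has `sdist r p = z`, and
by the spherical law of cosines `sdist q r = y` as soon as
`cos y = cos x cos z + sin x sin z cos φ`. As `φ` runs over `[0, π]` the right-hand side sweeps
`[cos (x + z), cos (x - z)]`, and the triangle and perimeter inequalities put `cos y` there.
-/

open Real InnerProductGeometry

section sdist

variable {u v w : EuclideanSpace ℝ (Fin 3)}

lemma norm_eq_one_of_mem_unitSphere (hu : u ∈ unitSphere) : ‖u‖ = 1 :=
  mem_sphere_zero_iff_norm.1 hu

lemma mem_unitSphere_iff_inner_self : u ∈ unitSphere ↔ ⟪u, u⟫ = 1 := by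
  rw [unitSphere, mem_sphere_zero_iff_norm, real_inner_self_eq_norm_sq,
    pow_eq_one_iff_of_nonneg (norm_nonneg u) two_ne_zero]

lemma sdist_map (A : EuclideanSpace ℝ (Fin 3) ≃ₗᵢ[ℝ] EuclideanSpace ℝ (Fin 3))
    (u v : EuclideanSpace ℝ (Fin 3)) : sdist (A u) (A v) = sdist u v := by
  rw [sdist, sdist, A.inner_map_map]

lemma sdist_le_pi (u v : EuclideanSpace ℝ (Fin 3)) : sdist u v ≤ π :=
  arccos_le_pi _

lemma sdist_eq_of_inner_eq_cos {x : ℝ} (h : ⟪u, v⟫ = cos x) (hx₀ : 0 ≤ x) (hxπ : x ≤ π) :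
    sdist u v = x := by
  rw [sdist, h, arccos_cos hx₀ hxπ]

lemma sdist_eq_angle (hu : u ∈ unitSphere) (hv : v ∈ unitSphere) : sdist u v = angle u v := by
  rw [sdist, angle, norm_eq_one_of_mem_unitSphere hu, norm_eq_one_of_mem_unitSphere hv, mul_one,
    div_one]

lemma sdist_pos_iff (hu : u ∈ unitSphere) (hv : v ∈ unitSphere) : 0 < sdist u v ↔ u ≠ v := by
  rw [sdist, arccos_pos, inner_lt_one_iff_real_of_norm_eq_one (norm_eq_one_of_mem_unitSphere hu)
    (norm_eq_one_of_mem_unitSphere hv)]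

lemma sdist_le_sdist_add_sdist (hu : u ∈ unitSphere) (hv : v ∈ unitSphere)
    (hw : w ∈ unitSphere) : sdist u v ≤ sdist v w + sdist w u := by
  rw [sdist_eq_angle hu hv, sdist_eq_angle hv hw, sdist_eq_angle hw hu, angle_comm v w,
    angle_comm w u, add_comm]
  exact angle_le_angle_add_angle u w v

lemma sdist_add_sdist_add_sdist_le (hu : u ∈ unitSphere) (hv : v ∈ unitSphere)
    (hw : w ∈ unitSphere) : sdist u v + sdist v w + sdist w u ≤ 2 * π := by
  rw [sdist_eq_angle hu hv, sdist_eq_angle hv hw, sdist_eq_angle hw hu]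
  have := angle_le_angle_add_angle u (-w) v
  rw [angle_neg_right, angle_neg_left] at this
  rw [angle_comm v w, angle_comm w u]
  linarith

end sdist

lemma cos_add_le_cos {x y z : ℝ} (hy : 0 ≤ y) (hyxz : y ≤ x + z) (hsum : x + y + z ≤ 2 * π) :
    cos (x + z) ≤ cos y := by
  rcases le_total (x + z) π with h | h
  · exact cos_le_cos_of_nonneg_of_le_pi hy h hyxz
  · rw [← cos_two_pi_sub]
    exact cos_le_cos_of_nonneg_of_le_pi hy (by linarith) (by linarith)

lemma cos_le_cos_sub {x y z : ℝ} (hy : y ≤ π) (hxyz : x ≤ y + z) (hzxy : z ≤ x + y) :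
    cos y ≤ cos (x - z) := by
  rw [← cos_abs (x - z)]
  exact cos_le_cos_of_nonneg_of_le_pi (abs_nonneg _) hy
    (abs_sub_le_iff.2 ⟨by linarith, by linarith⟩)

lemma exists_cos_mul_cos_add_sin_mul_sin_mul_cos_eq {x z t : ℝ} (h₁ : cos (x + z) ≤ t)
    (h₂ : t ≤ cos (x - z)) : ∃ φ, cos x * cos z + sin x * sin z * cos φ = t := by
  have hcont : Continuous fun φ => cos x * cos z + sin x * sin z * cos φ := by fun_prop
  obtain ⟨φ, -, hφ⟩ := intermediate_value_Icc' pi_pos.le hcont.continuousOn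
    ⟨by simpa [cos_add, sub_eq_add_neg] using h₁, by simpa [cos_sub] using h₂⟩
  exact ⟨φ, hφ⟩

lemma inner_vec3 (a b c a' b' c' : ℝ) :
    ⟪!₂[a, b, c], !₂[a', b', c']⟫ = a * a' + b * b' + c * c' := by
  simp only [PiLp.inner_apply, RCLike.inner_apply, Real.ringHom_apply, Fin.sum_univ_three,
    Matrix.cons_val_zero, Matrix.cons_val_one, Matrix.cons_val]
  ring

lemma exists_mem_unitSphere_sdist_eq {x y z : ℝ} (hx₀ : 0 ≤ x) (hy₀ : 0 ≤ y) (hz₀ : 0 ≤ z)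
    (hxπ : x ≤ π) (hyπ : y ≤ π) (hzπ : z ≤ π) (hsum : x + y + z ≤ 2 * π)
    (hxyz : x ≤ y + z) (hyzx : y ≤ z + x) (hzxy : z ≤ x + y) :
    ∃ p q r, p ∈ unitSphere ∧ q ∈ unitSphere ∧ r ∈ unitSphere ∧
      sdist p q = x ∧ sdist q r = y ∧ sdist r p = z := by
  obtain ⟨φ, hφ⟩ := exists_cos_mul_cos_add_sin_mul_sin_mul_cos_eq
    (cos_add_le_cos hy₀ (by linarith) hsum) (cos_le_cos_sub hyπ hxyz hzxy)
  refine ⟨!₂[1, 0, 0], !₂[cos x, sin x, 0], !₂[cos z, sin z * cos φ, sin z * sin φ],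
    ?_, ?_, ?_, sdist_eq_of_inner_eq_cos ?_ hx₀ hxπ, sdist_eq_of_inner_eq_cos ?_ hy₀ hyπ,
    sdist_eq_of_inner_eq_cos ?_ hz₀ hzπ⟩ <;>
    simp only [mem_unitSphere_iff_inner_self, inner_vec3]
  · ring
  · linear_combination sin_sq_add_cos_sq x
  · linear_combination sin_sq_add_cos_sq z + sin z ^ 2 * sin_sq_add_cos_sq φ
  · ring
  · linear_combination hφ
  · ring

theorem stmt_19 :
    (∀ A : EuclideanSpace ℝ (Fin 3) ≃ₗᵢ[ℝ] EuclideanSpace ℝ (Fin 3),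
      ∀ p q : EuclideanSpace ℝ (Fin 3), sdist (A p) (A q) = sdist p q) ∧
    {t : ℝ × ℝ × ℝ | ∃ p q r : EuclideanSpace ℝ (Fin 3),
        p ∈ unitSphere ∧ q ∈ unitSphere ∧ r ∈ unitSphere ∧
        p ≠ q ∧ q ≠ r ∧ r ≠ p ∧
        t = (sdist p q, sdist q r, sdist r p)} =
      {t : ℝ × ℝ × ℝ | 0 < t.1 ∧ 0 < t.2.1 ∧ 0 < t.2.2 ∧
        t.1 ≤ Real.pi ∧ t.2.1 ≤ Real.pi ∧ t.2.2 ≤ Real.pi ∧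
        t.1 + t.2.1 + t.2.2 ≤ 2 * Real.pi ∧ t.1 ≤ t.2.1 + t.2.2 ∧
        t.2.1 ≤ t.2.2 + t.1 ∧ t.2.2 ≤ t.1 + t.2.1} := by
  refine ⟨sdist_map, ?_⟩
  ext ⟨x, y, z⟩
  simp only [Set.mem_ofPred_eq, Prod.mk.injEq]
  constructor
  · rintro ⟨p, q, r, hp, hq, hr, hpq, hqr, hrp, rfl, rfl, rfl⟩
    exact ⟨(sdist_pos_iff hp hq).2 hpq, (sdist_pos_iff hq hr).2 hqr, (sdist_pos_iff hr hp).2 hrp,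
      sdist_le_pi p q, sdist_le_pi q r, sdist_le_pi r p, sdist_add_sdist_add_sdist_le hp hq hr,
      sdist_le_sdist_add_sdist hp hq hr, sdist_le_sdist_add_sdist hq hr hp,
      sdist_le_sdist_add_sdist hr hp hq⟩
  · rintro ⟨hx, hy, hz, hxπ, hyπ, hzπ, hsum, hxyz, hyzx, hzxy⟩
    obtain ⟨p, q, r, hp, hq, hr, rfl, rfl, rfl⟩ := exists_mem_unitSphere_sdist_eq hx.le hy.le
      hz.le hxπ hyπ hzπ hsum hxyz hyzx hzxy
    exact ⟨p, q, r, hp, hq, hr, (sdist_pos_iff hp hq).1 hx, (sdist_pos_iff hq hr).1 hy,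
      (sdist_pos_iff hr hp).1 hz, rfl, rfl, rfl⟩
end
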